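/- For α ∈ (0,1) there is a constant c(α) such that for every k ≥ 1 and every integer p ≥ M_k, ∫_{G_m²} |∑_{i=1}^{M_k} A_{p−i}^{−α−1} D_i(u) D_i(v)| dμ(u,v) ≤ c(α). -/

import Mathlib

/-!
Write `N = M_k`. By the triangle inequality and Tonelli the integral is at most
`∑_{i ≤ N} |A_{p-i}^{-α-1}| ‖D_i‖₁²`. Substituting `i = N - r`, the coefficient is at most
`|A_r^{-α-1}|` because `|A_n^{-α-1}|` decreases in `n`, and `‖D_{N-r}‖₁ ≤ 1 + ‖D_r‖₁` because
`D_N - D_{N-r} = ψ_{N-1} · conj D_r` and `D_{M_k} = M_k 1_{I_k}` has `L¹` norm one. Finally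
`|A_r^{-α-1}| = O(r^{-1-α})` while `‖D_r‖₁ ≤ Λ j` for `r < M_j`, so the block `M_j ≤ r < M_{j+1}`
contributes `O(j² M_j^{-α}) = O(j² 2^{-αj})`, which is summable in `j`.
-/

open MeasureTheory Finset
open scoped ENNReal NNReal

noncomputable section

/-- Discrete measurable structure on each finite cyclic factor. -/
instance (n : ℕ) : MeasurableSpace (ZMod n) := ⊤

/-- The Vilenkin group determined by the generating sequence `m`. -/
abbrev Vil (m : ℕ → ℕ) : Type := ∀ k, ZMod (m k)

/-- Generalized numbers `M_k`. -/
def Mgen (m : ℕ → ℕ) : ℕ → ℕ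
  | 0 => 1
  | k + 1 => m k * Mgen m k

/-- `j`-th digit of `n` in the generalized number system. -/
def vdigit (m : ℕ → ℕ) (n j : ℕ) : ℕ := (n / Mgen m j) % m j

/-- Vilenkin functions `ψ_n = ∏ r_k^{n_k}`. -/
def vpsi (m : ℕ → ℕ) (n : ℕ) (x : Vil m) : ℂ :=
  ∏ k ∈ Finset.range (n + 1),
    Complex.exp (2 * Real.pi * Complex.I * ((x k).val : ℂ) / (m k : ℂ)) ^ vdigit m n k

/-- Vilenkin–Dirichlet kernels `D_n = ∑_{k<n} ψ_k`. -/
def vD (m : ℕ → ℕ) (n : ℕ) (x : Vil m) : ℂ := ∑ k ∈ Finset.range n, vpsi m k x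

/-- Cesàro numbers `A_n^α = ∏_{j=1}^n (α+j) / n!` (so `A_0^α = 1`). -/
def ces (α : ℝ) (n : ℕ) : ℝ := (∏ j ∈ Finset.range n, (α + j + 1)) / n.factorial

/-- The normalized "absolute value" `|u| = ∑_j u_j / M_{j+1}` on a Vilenkin group. -/
def vabs (m : ℕ → ℕ) (u : Vil m) : ℝ := ∑' j, ((u j).val : ℝ) / Mgen m (j + 1)

/-- Standard subgroup `I_n = {y : y_0 = ⋯ = y_{n-1} = 0}`. -/
def In (m : ℕ → ℕ) (n : ℕ) : Set (Vil m) := {u | ∀ j < n, u j = 0}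

lemma one_sub_mul_mul_one_add_rpow_le_one {x b : ℝ} (hx : 0 ≤ x) (hb : 0 ≤ b) :
    (1 - b * x) * (1 + x) ^ b ≤ 1 := by
  rcases le_or_gt 0 (1 - b * x) with h | h
  · calc (1 - b * x) * (1 + x) ^ b ≤ Real.exp (-(b * x)) * Real.exp (b * x) := by
          gcongr
          · linarith [Real.add_one_le_exp (-(b * x))]
          · calc (1 + x) ^ b ≤ Real.exp x ^ b := by
                  gcongr
                  linarith [Real.add_one_le_exp x]
              _ = Real.exp (b * x) := by rw [← Real.exp_mul, mul_comm]
      _ = 1 := by rw [← Real.exp_add, neg_add_cancel, Real.exp_zero]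
  · nlinarith [Real.rpow_nonneg (by linarith : (0 : ℝ) ≤ 1 + x) b]

lemma summable_sq_mul_geometric {a d w : ℝ} (hw : ‖w‖ < 1) :
    Summable fun j : ℕ => (a + d * j) ^ 2 * w ^ j := by
  have h := fun k => summable_pow_mul_geometric_of_norm_lt_one (R := ℝ) k hw
  exact (((h 0).mul_left (a ^ 2)).add (((h 1).mul_left (2 * a * d)).add
    ((h 2).mul_left (d ^ 2)))).congr fun j => by ring

lemma lintegral_enorm_sum_mul_le {α β ι 𝕜 : Type*} [MeasurableSpace α] [MeasurableSpace β]
    [NormedDivisionRing 𝕜] {μ : Measure α} {ν : Measure β} [SFinite ν] (s : Finset ι)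
    (c : ι → 𝕜) {f : ι → α → 𝕜} {g : ι → β → 𝕜} (hf : ∀ i, AEMeasurable (fun x => ‖f i x‖ₑ) μ)
    (hg : ∀ i, AEMeasurable (fun y => ‖g i y‖ₑ) ν) :
    ∫⁻ z, ‖∑ i ∈ s, c i * f i z.1 * g i z.2‖ₑ ∂μ.prod ν
      ≤ ∑ i ∈ s, ‖c i‖ₑ * ((∫⁻ x, ‖f i x‖ₑ ∂μ) * ∫⁻ y, ‖g i y‖ₑ ∂ν) :=
  calc _ ≤ ∫⁻ z, ∑ i ∈ s, ‖c i‖ₑ * (‖f i z.1‖ₑ * ‖g i z.2‖ₑ) ∂μ.prod ν :=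
        lintegral_mono fun z =>
          (enorm_sum_le _ _).trans (by simp only [enorm_mul, mul_assoc, le_rfl])
    _ = _ := by
      rw [lintegral_finsetSum' _ fun i _ => show AEMeasurable
        (fun z : α × β => ‖c i‖ₑ * (‖f i z.1‖ₑ * ‖g i z.2‖ₑ)) (μ.prod ν) from
        ((hf i).comp_fst.mul (hg i).comp_snd).const_mul _]
      exact sum_congr rfl fun i _ => by
        rw [lintegral_const_mul' _ _ enorm_ne_top, lintegral_prod_mul (hf i) (hg i)]

lemma ces_zero (β : ℝ) : ces β 0 = 1 := by simp [ces]

lemma ces_succ (β : ℝ) (n : ℕ) : ces β (n + 1) = ces β n * ((β + n + 1) / (n + 1)) := by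
  simp only [ces, prod_range_succ, Nat.factorial_succ]
  push_cast
  field_simp

lemma abs_ces_neg_succ (α : ℝ) (n : ℕ) :
    |ces (-α - 1) (n + 1)| = |ces (-α - 1) n| * (|n - α| / (n + 1)) := by
  rw [ces_succ, abs_mul, abs_div, abs_of_pos (by positivity : (0 : ℝ) < n + 1)]
  ring_nf

lemma abs_ces_neg_antitone {α : ℝ} (h₀ : -1 ≤ α) (h₁ : α ≤ 1) :
    Antitone fun n => |ces (-α - 1) n| :=
  antitone_nat_of_succ_le fun n => by
    rw [abs_ces_neg_succ]
    refine mul_le_of_le_one_right (abs_nonneg _)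
      ((div_le_one (by positivity)).2 (abs_le.2 ⟨?_, ?_⟩))
    · have : (0 : ℝ) ≤ n := n.cast_nonneg
      linarith
    · linarith

lemma abs_ces_neg_mul_rpow_le {α : ℝ} (h₀ : -1 ≤ α) (h₁ : α ≤ 1) (n : ℕ) :
    |ces (-α - 1) n| * ((n : ℝ) + 1) ^ (1 + α) ≤ 4 := by
  rcases Nat.eq_zero_or_pos n with rfl | hn
  · simp [ces_zero]
  induction n, hn using Nat.le_induction with
  | base =>
    have h2 : (2 : ℝ) ^ (1 + α) ≤ 2 ^ (2 : ℝ) :=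
      Real.rpow_le_rpow_of_exponent_le one_le_two (by linarith)
    rw [abs_ces_neg_succ, ces_zero]
    norm_num at h2 ⊢
    nlinarith [abs_le.2 ⟨h₀, h₁⟩, abs_nonneg α]
  | succ n hn ih =>
    have hpos : (0 : ℝ) < n + 1 := by positivity
    have hn' : (1 : ℝ) ≤ n := by exact_mod_cast hn
    obtain ⟨x, hx0, hx⟩ : ∃ x : ℝ, 0 ≤ x ∧ x * (n + 1) = 1 :=
      ⟨(n + 1)⁻¹, by positivity, inv_mul_cancel₀ hpos.ne'⟩
    have hnα : |(n : ℝ) - α| = (n + 1) * (1 - (1 + α) * x) := by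
      rw [abs_of_nonneg (by linarith)]
      linear_combination (1 + α) * hx
    have hn2 : ((n + 1 : ℕ) : ℝ) + 1 = (n + 1) * (1 + x) := by
      push_cast
      linear_combination -hx
    -- consecutive terms have ratio `(1 - (1 + α) x) (1 + x) ^ (1 + α)`, where `x = 1 / (n + 1)`
    calc |ces (-α - 1) (n + 1)| * (((n + 1 : ℕ) : ℝ) + 1) ^ (1 + α)
        = |ces (-α - 1) n| * ((n : ℝ) + 1) ^ (1 + α)
            * ((1 - (1 + α) * x) * (1 + x) ^ (1 + α)) := by
          rw [abs_ces_neg_succ, hnα, hn2, Real.mul_rpow hpos.le (by positivity),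
            mul_div_cancel_left₀ _ hpos.ne']
          ring
      _ ≤ |ces (-α - 1) n| * ((n : ℝ) + 1) ^ (1 + α) :=
          mul_le_of_le_one_right (by positivity)
            (one_sub_mul_mul_one_add_rpow_le_one hx0 (by linarith))
      _ ≤ 4 := ih

variable {m : ℕ → ℕ}

lemma neZero_of_two_le (hm : ∀ k, 2 ≤ m k) (k : ℕ) : NeZero (m k) :=
  ⟨by have := hm k; omega⟩

lemma Mgen_succ (m : ℕ → ℕ) (j : ℕ) : Mgen m (j + 1) = m j * Mgen m j := rfl

lemma Mgen_eq_prod (m : ℕ → ℕ) (j : ℕ) : Mgen m j = ∏ i ∈ range j, m i := by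
  induction j with
  | zero => rfl
  | succ j ih => rw [prod_range_succ, Mgen_succ, ih, mul_comm]

lemma Mgen_pos [∀ k, NeZero (m k)] (j : ℕ) : 0 < Mgen m j := by
  rw [Mgen_eq_prod]
  exact prod_pos fun i _ => Nat.pos_of_neZero (m i)

lemma Mgen_dvd_Mgen (m : ℕ → ℕ) {i j : ℕ} (h : i ≤ j) : Mgen m i ∣ Mgen m j := by
  rw [Mgen_eq_prod, Mgen_eq_prod]
  exact prod_dvd_prod_of_subset _ _ _ (range_subset_range.2 h)

lemma Mgen_mono [∀ k, NeZero (m k)] : Monotone (Mgen m) :=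
  fun _ _ h => Nat.le_of_dvd (Mgen_pos _) (Mgen_dvd_Mgen m h)

lemma exists_eq_mul_Mgen_add [∀ k, NeZero (m k)] {j n : ℕ} (hn : n < Mgen m (j + 1)) :
    ∃ s a, s < m j ∧ a < Mgen m j ∧ n = s * Mgen m j + a :=
  ⟨n / Mgen m j, n % Mgen m j, Nat.div_lt_of_lt_mul (by rwa [mul_comm]),
    Nat.mod_lt _ (Mgen_pos j), (Nat.div_add_mod' n _).symm⟩

lemma two_pow_le_Mgen (hm : ∀ k, 2 ≤ m k) (j : ℕ) : 2 ^ j ≤ Mgen m j := by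
  rw [Mgen_eq_prod]
  simpa using pow_card_le_prod (range j) m 2 fun i _ => hm i

lemma lt_Mgen_self (hm : ∀ k, 2 ≤ m k) (t : ℕ) : t < Mgen m t :=
  t.lt_two_pow_self.trans_le (two_pow_le_Mgen hm t)

lemma vdigit_eq_zero_of_lt {t i : ℕ} (h : t < Mgen m i) : vdigit m t i = 0 := by
  simp [vdigit, Nat.div_eq_of_lt h]

lemma vdigit_add_mul_Mgen_of_lt [∀ k, NeZero (m k)] {i j : ℕ} (hij : i < j) (a s : ℕ) :
    vdigit m (a + s * Mgen m j) i = vdigit m a i := by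
  obtain ⟨c, hc⟩ := Mgen_dvd_Mgen m hij
  rw [vdigit, vdigit, hc, Mgen_succ,
    show s * (m i * Mgen m i * c) = Mgen m i * (m i * (s * c)) by ring,
    Nat.add_mul_div_left _ _ (Mgen_pos i), Nat.add_mul_mod_self_left]

lemma vdigit_add_mul_Mgen_self [∀ k, NeZero (m k)] {j a s : ℕ} (ha : a < Mgen m j)
    (hs : s < m j) : vdigit m (a + s * Mgen m j) j = s := by
  rw [vdigit, Nat.add_mul_div_right _ _ (Mgen_pos j), Nat.div_eq_of_lt ha, zero_add,
    Nat.mod_eq_of_lt hs]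

lemma sum_range_Mgen [∀ k, NeZero (m k)] {M : Type*} [AddCommMonoid M] (f : ℕ → M) (k : ℕ) :
    ∑ r ∈ range (Mgen m k), f r
      = f 0 + ∑ j ∈ range k, ∑ r ∈ Ico (Mgen m j) (Mgen m (j + 1)), f r := by
  induction k with
  | zero => simp [Mgen]
  | succ k ih =>
    rw [sum_range_succ, ← add_assoc, ← ih, sum_range_add_sum_Ico _ (Mgen_mono k.le_succ)]

section DyadicBlocks

variable {Λ : ℕ} {α : ℝ} {c : ℕ → ℝ} {L : ℕ → ℝ≥0∞}

lemma enorm_mul_sq_le_of_mem_Ico [∀ k, NeZero (m k)] (hα : -1 ≤ α)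
    (hc : ∀ r, |c r| * ((r : ℝ) + 1) ^ (1 + α) ≤ 4) (hL : ∀ j r, r < Mgen m j → L r ≤ Λ * j)
    {j r : ℕ} (hr : r ∈ Ico (Mgen m j) (Mgen m (j + 1))) :
    ‖c r‖ₑ * (1 + L r) ^ 2
      ≤ ENNReal.ofReal (4 / (Mgen m j : ℝ) ^ (1 + α) * ((1 + Λ) + Λ * j) ^ 2) := by
  obtain ⟨hjr, hrj⟩ := mem_Ico.1 hr
  have hcr : |c r| ≤ 4 / (Mgen m j : ℝ) ^ (1 + α) :=
    calc |c r| ≤ 4 / ((r : ℝ) + 1) ^ (1 + α) := (le_div_iff₀ (by positivity)).2 (hc r)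
      _ ≤ _ := by
        have : (Mgen m j : ℝ) ≤ r := by exact_mod_cast hjr
        have := Mgen_pos (m := m) j
        gcongr
        · linarith
        · linarith
  have hLr : 1 + L r ≤ ENNReal.ofReal ((1 + Λ) + Λ * j) := by
    have := hL (j + 1) r hrj
    rw [ENNReal.ofReal_add (by positivity) (by positivity), ENNReal.ofReal_add zero_le_one
      (by positivity), ENNReal.ofReal_mul (by positivity), ENNReal.ofReal_one,
      ENNReal.ofReal_natCast, ENNReal.ofReal_natCast, add_assoc]
    push_cast [mul_add, mul_one, add_comm] at this
    gcongr
  rw [← ofReal_norm, Real.norm_eq_abs, ENNReal.ofReal_mul (by positivity),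
    ENNReal.ofReal_pow (by positivity)]
  gcongr

lemma sum_Ico_Mgen_enorm_mul_sq_le (hm : ∀ k, 2 ≤ m k) (hΛ : ∀ k, m k ≤ Λ) (hα : 0 ≤ α)
    (hc : ∀ r, |c r| * ((r : ℝ) + 1) ^ (1 + α) ≤ 4) (hL : ∀ j r, r < Mgen m j → L r ≤ Λ * j)
    (j : ℕ) :
    ∑ r ∈ Ico (Mgen m j) (Mgen m (j + 1)), ‖c r‖ₑ * (1 + L r) ^ 2
      ≤ ENNReal.ofReal (4 * Λ * ((1 + Λ) + Λ * j) ^ 2 * ((2 : ℝ) ^ α)⁻¹ ^ j) := by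
  have := neZero_of_two_le hm
  have hM : (0 : ℝ) < Mgen m j := by exact_mod_cast Mgen_pos j
  have hcard : (#(Ico (Mgen m j) (Mgen m (j + 1))) : ℝ) ≤ Λ * Mgen m j := by
    rw [Nat.card_Ico]
    exact_mod_cast (Nat.sub_le _ _).trans (Nat.mul_le_mul_right _ (hΛ j))
  have hdecay : (Mgen m j : ℝ) / (Mgen m j : ℝ) ^ (1 + α) ≤ ((2 : ℝ) ^ α)⁻¹ ^ j := by
    have h2 : ((2 : ℝ) ^ j) ^ α ≤ (Mgen m j : ℝ) ^ α := by
      gcongr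
      exact_mod_cast two_pow_le_Mgen hm j
    rw [Real.rpow_add hM, Real.rpow_one, div_mul_cancel_left₀ hM.ne', inv_pow,
      ← Real.rpow_mul_natCast zero_le_two, mul_comm, Real.rpow_natCast_mul zero_le_two]
    exact inv_anti₀ (by positivity) h2
  calc ∑ r ∈ Ico (Mgen m j) (Mgen m (j + 1)), ‖c r‖ₑ * (1 + L r) ^ 2
      ≤ #(Ico (Mgen m j) (Mgen m (j + 1)))
          • ENNReal.ofReal (4 / (Mgen m j : ℝ) ^ (1 + α) * ((1 + Λ) + Λ * j) ^ 2) :=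
        sum_le_card_nsmul _ _ _ fun r hr =>
          enorm_mul_sq_le_of_mem_Ico (by linarith) hc hL hr
    _ = ENNReal.ofReal (#(Ico (Mgen m j) (Mgen m (j + 1)))
          * (4 / (Mgen m j : ℝ) ^ (1 + α) * ((1 + Λ) + Λ * j) ^ 2)) := by
        rw [nsmul_eq_mul, ← ENNReal.ofReal_natCast, ← ENNReal.ofReal_mul (Nat.cast_nonneg _)]
    _ ≤ _ := by
        refine ENNReal.ofReal_le_ofReal ?_
        calc _ ≤ (Λ * Mgen m j : ℝ) * (4 / (Mgen m j : ℝ) ^ (1 + α) * ((1 + Λ) + Λ * j) ^ 2) := by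
              gcongr
          _ = 4 * Λ * ((1 + Λ) + Λ * j) ^ 2 * ((Mgen m j : ℝ) / (Mgen m j : ℝ) ^ (1 + α)) := by
              ring
          _ ≤ _ := mul_le_mul_of_nonneg_left hdecay (by positivity)

lemma exists_sum_range_Mgen_enorm_mul_sq_le (hm : ∀ k, 2 ≤ m k) (hΛ : ∀ k, m k ≤ Λ)
    (hα : 0 < α) (hc : ∀ r, |c r| * ((r : ℝ) + 1) ^ (1 + α) ≤ 4)
    (hL : ∀ j r, r < Mgen m j → L r ≤ Λ * j) :
    ∃ C : ℝ, 0 < C ∧ ∀ k, ∑ r ∈ range (Mgen m k), ‖c r‖ₑ * (1 + L r) ^ 2 ≤ ENNReal.ofReal C := by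
  have := neZero_of_two_le hm
  set b : ℕ → ℝ := fun j => 4 * Λ * ((1 + Λ) + Λ * j) ^ 2 * ((2 : ℝ) ^ α)⁻¹ ^ j
  have hb : Summable b := by
    have hw : ‖((2 : ℝ) ^ α)⁻¹‖ < 1 := by
      rw [Real.norm_of_nonneg (by positivity)]
      exact inv_lt_one_of_one_lt₀ (Real.one_lt_rpow (by norm_num) hα)
    exact ((summable_sq_mul_geometric hw).mul_left (4 * (Λ : ℝ))).congr fun j =>
      (mul_assoc _ _ _).symm
  have h0 : ‖c 0‖ₑ * (1 + L 0) ^ 2 ≤ ENNReal.ofReal 4 := by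
    have hL0 : L 0 = 0 := nonpos_iff_eq_zero.1 (by simpa using hL 0 0 (Mgen_pos 0))
    rw [hL0, ← ofReal_norm, Real.norm_eq_abs]
    simpa using hc 0
  refine ⟨4 + ∑' j, b j, by positivity, fun k => ?_⟩
  calc ∑ r ∈ range (Mgen m k), ‖c r‖ₑ * (1 + L r) ^ 2
      ≤ ENNReal.ofReal 4 + ∑ j ∈ range k, ENNReal.ofReal (b j) := by
        rw [sum_range_Mgen]
        exact add_le_add h0 (sum_le_sum fun j _ =>
          sum_Ico_Mgen_enorm_mul_sq_le hm hΛ hα.le hc hL j)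
    _ = ENNReal.ofReal (4 + ∑ j ∈ range k, b j) := by
        rw [ENNReal.ofReal_add (by norm_num) (sum_nonneg fun j _ => by positivity),
          ENNReal.ofReal_sum_of_nonneg fun j _ => by positivity]
    _ ≤ ENNReal.ofReal (4 + ∑' j, b j) := by
        gcongr
        exact hb.sum_le_tsum _ fun j _ => by positivity

end DyadicBlocks

/-- The generalized Rademacher function `r_k`. -/
def vrad (m : ℕ → ℕ) (k : ℕ) (x : Vil m) : ℂ :=
  Complex.exp (2 * Real.pi * Complex.I * ((x k).val : ℂ) / (m k : ℂ))

lemma vrad_eq_stdAddChar {k : ℕ} [NeZero (m k)] (x : Vil m) :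
    vrad m k x = ZMod.stdAddChar (x k) := by
  rw [ZMod.stdAddChar_apply, ZMod.toCircle_apply]
  rfl

lemma norm_vrad (k : ℕ) (x : Vil m) : ‖vrad m k x‖ = 1 := by
  rw [vrad, Complex.norm_exp]
  simp

lemma vrad_pow_self (k : ℕ) (x : Vil m) : vrad m k x ^ m k = 1 := by
  rcases eq_zero_or_neZero (m k) with h | _
  · rw [h, pow_zero]
  · rw [vrad_eq_stdAddChar, ← AddChar.map_nsmul_eq_pow, nsmul_eq_mul, ZMod.natCast_self, zero_mul,
      AddChar.map_zero_eq_one]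

lemma sum_range_vrad_pow {k : ℕ} [NeZero (m k)] (x : Vil m) :
    ∑ σ ∈ range (m k), vrad m k x ^ σ = if x k = 0 then (m k : ℂ) else 0 := by
  split_ifs with h
  · simp [vrad_eq_stdAddChar, h]
  · have hne : vrad m k x ≠ 1 := by
      rw [vrad_eq_stdAddChar, ← AddChar.map_zero_eq_one (ZMod.stdAddChar (N := m k))]
      exact ZMod.injective_stdAddChar.ne h
    rw [geom_sum_eq hne, vrad_pow_self, sub_self, zero_div]

lemma vpsi_eq_prod (hm : ∀ k, 2 ≤ m k) {J t : ℕ} (ht : t < Mgen m J) (x : Vil m) :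
    vpsi m t x = ∏ i ∈ range J, vrad m i x ^ vdigit m t i := by
  have := neZero_of_two_le hm
  have extend : ∀ {L₁ L₂}, L₁ ≤ L₂ → t < Mgen m L₁ →
      ∏ i ∈ range L₂, vrad m i x ^ vdigit m t i = ∏ i ∈ range L₁, vrad m i x ^ vdigit m t i :=
    fun h₁₂ h₁ => (prod_subset (range_subset_range.2 h₁₂) fun i _ hi => by
      rw [vdigit_eq_zero_of_lt (h₁.trans_le (Mgen_mono (not_lt.1 (mem_range.not.1 hi)))),
        pow_zero]).symm
  have htop : t < Mgen m (t + 1) := (lt_Mgen_self hm t).trans_le (Mgen_mono t.le_succ)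
  rcases le_total J (t + 1) with h | h
  · exact extend h ht
  · exact (extend h htop).symm

lemma norm_vpsi (t : ℕ) (x : Vil m) : ‖vpsi m t x‖ = 1 := by
  change ‖∏ k ∈ range (t + 1), vrad m k x ^ vdigit m t k‖ = 1
  simp [norm_vrad]

lemma vpsi_zero (x : Vil m) : vpsi m 0 x = 1 := by
  simp [vpsi, vdigit]

lemma vpsi_add_mul (hm : ∀ k, 2 ≤ m k) {j a s : ℕ} (ha : a < Mgen m j) (hs : s < m j)
    (x : Vil m) : vpsi m (a + s * Mgen m j) x = vpsi m a x * vrad m j x ^ s := by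
  have := neZero_of_two_le hm
  have hlt : a + s * Mgen m j < Mgen m (j + 1) := by rw [Mgen_succ]; nlinarith
  rw [vpsi_eq_prod hm hlt, prod_range_succ, vdigit_add_mul_Mgen_self ha hs, vpsi_eq_prod hm ha]
  congr 1
  exact prod_congr rfl fun i hi => by rw [vdigit_add_mul_Mgen_of_lt (mem_range.1 hi)]

lemma vD_add (n a : ℕ) (x : Vil m) :
    vD m (n + a) x = vD m n x + ∑ b ∈ range a, vpsi m (n + b) x :=
  sum_range_add _ _ _

lemma vD_mul_Mgen_add (hm : ∀ k, 2 ≤ m k) {j s a : ℕ} (hs : s < m j) (ha : a ≤ Mgen m j)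
    (x : Vil m) :
    vD m (s * Mgen m j + a) x = vD m (s * Mgen m j) x + vrad m j x ^ s * vD m a x := by
  rw [vD_add, vD, vD, mul_sum]
  congr 1
  exact sum_congr rfl fun b hb => by
    rw [add_comm, vpsi_add_mul hm ((mem_range.1 hb).trans_le ha) hs, mul_comm]

lemma vD_mul_Mgen (hm : ∀ k, 2 ≤ m k) {j s : ℕ} (hs : s ≤ m j) (x : Vil m) :
    vD m (s * Mgen m j) x = (∑ σ ∈ range s, vrad m j x ^ σ) * vD m (Mgen m j) x := by
  induction s with
  | zero => simp [vD]
  | succ s ih =>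
    rw [add_mul, one_mul, vD_mul_Mgen_add hm (by omega) le_rfl, ih (by omega), sum_range_succ]
    ring

lemma vD_Mgen (hm : ∀ k, 2 ≤ m k) (n : ℕ) (x : Vil m) :
    vD m (Mgen m n) x = (In m n).indicator (fun _ => (Mgen m n : ℂ)) x := by
  have := neZero_of_two_le hm
  induction n with
  | zero => simp [Mgen, In, vD, vpsi_zero]
  | succ n ih =>
    have hIn : x ∈ In m (n + 1) ↔ x ∈ In m n ∧ x n = 0 := by
      simp only [In, Set.mem_ofPred_eq, Nat.lt_succ_iff_lt_or_eq, or_imp, forall_and,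
        forall_eq]
    rw [Mgen_succ, vD_mul_Mgen hm le_rfl, sum_range_vrad_pow, ih]
    by_cases h₁ : x ∈ In m n <;> by_cases h₂ : x n = 0 <;> simp [h₁, h₂, hIn]

lemma vpsi_mul_vpsi_Mgen_sub (hm : ∀ k, 2 ≤ m k) {n c : ℕ} (hc : c < Mgen m n) (x : Vil m) :
    vpsi m c x * vpsi m (Mgen m n - 1 - c) x = vpsi m (Mgen m n - 1) x := by
  have := neZero_of_two_le hm
  induction n generalizing c with
  | zero =>
    obtain rfl : c = 0 := by simpa [Mgen] using hc
    simp [Mgen, vpsi_zero]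
  | succ n ih =>
    obtain ⟨s, a, hs, ha, rfl⟩ := exists_eq_mul_Mgen_add hc
    set M := Mgen m n
    have hmn := hm n
    have hsM : s * M + M ≤ m n * M := by nlinarith
    have hsub : (m n - 1 - s) * M = m n * M - M - s * M := by
      rw [Nat.sub_mul, Nat.sub_mul, one_mul]
    have htop : (m n - 1) * M = m n * M - M := by rw [Nat.sub_mul, one_mul]
    -- the digits of `M_{n+1} - 1 - c` are those of `c` subtracted from `m_i - 1`
    rw [Mgen_succ, add_comm (s * M),
      show m n * M - 1 - (a + s * M) = (M - 1 - a) + (m n - 1 - s) * M by omega,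
      show m n * M - 1 = (M - 1) + (m n - 1) * M by omega, vpsi_add_mul hm ha hs,
      vpsi_add_mul hm (by omega) (by omega), vpsi_add_mul hm (by omega) (by omega), ← ih ha]
    have hpow : vrad m n x ^ s * vrad m n x ^ (m n - 1 - s) = vrad m n x ^ (m n - 1) := by
      rw [← pow_add]
      congr 1
      omega
    rw [← hpow]
    ring

lemma norm_vD_Mgen_sub_vD (hm : ∀ k, 2 ≤ m k) {n i : ℕ} (hi : i ≤ Mgen m n) (x : Vil m) :
    ‖vD m (Mgen m n) x - vD m i x‖ = ‖vD m (Mgen m n - i) x‖ := by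
  have hsplit : vD m (Mgen m n) x - vD m i x
      = vpsi m (Mgen m n - 1) x * starRingEnd ℂ (vD m (Mgen m n - i) x) := by
    conv_lhs => rw [show Mgen m n = i + (Mgen m n - i) by omega]
    rw [vD_add, add_sub_cancel_left, ← sum_range_reflect, vD, map_sum, mul_sum]
    refine sum_congr rfl fun c hc => ?_
    have hc' := mem_range.1 hc
    rw [show i + (Mgen m n - i - 1 - c) = Mgen m n - 1 - c by omega,
      ← vpsi_mul_vpsi_Mgen_sub hm (c := c) (by omega) x, mul_comm (vpsi m c x), mul_assoc,
      Complex.mul_conj', norm_vpsi]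
    simp
  rw [hsplit, norm_mul, norm_vpsi, one_mul, Complex.norm_conj]

lemma measurable_vD (m : ℕ → ℕ) (n : ℕ) : Measurable (vD m n) :=
  Finset.measurable_sum _ fun _ _ => Finset.measurable_prod _ fun k _ =>
    (measurable_from_top (f := fun z : ZMod (m k) =>
      Complex.exp (2 * Real.pi * Complex.I * (z.val : ℂ) / (m k : ℂ)) ^ _)).comp
      (measurable_pi_apply k)

lemma measurableSet_In (m : ℕ → ℕ) (n : ℕ) : MeasurableSet (In m n) := by
  simp only [In, Set.ofPred_forall]
  exact MeasurableSet.iInter fun j => MeasurableSet.iInter fun _ =>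
    measurable_pi_apply j (t := {0}) MeasurableSpace.measurableSet_top

def restrictHom (m : ℕ → ℕ) (n : ℕ) : Vil m →+ ((i : Fin n) → ZMod (m i)) :=
  { toFun := fun x i => x i, map_zero' := rfl, map_add' := fun _ _ => rfl }

lemma coe_ker_restrictHom (m : ℕ → ℕ) (n : ℕ) : ((restrictHom m n).ker : Set (Vil m)) = In m n := by
  ext x
  simp [restrictHom, In, funext_iff, Fin.forall_iff]

lemma index_ker_restrictHom [∀ k, NeZero (m k)] (n : ℕ) :
    (restrictHom m n).ker.index = Mgen m n := by
  have hsurj : Function.Surjective (restrictHom m n) := fun v =>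
    ⟨fun k => if h : k < n then v ⟨k, h⟩ else 0, funext fun i => by simp [restrictHom]⟩
  rw [AddSubgroup.index_ker, AddMonoidHom.range_eq_top.2 hsurj, AddSubgroup.card_top, Nat.card_pi,
    Mgen_eq_prod, ← Fin.prod_univ_eq_prod_range]
  simp

lemma Mgen_mul_measure_In [∀ k, NeZero (m k)] (μ : Measure (Vil m)) [μ.IsAddLeftInvariant]
    (n : ℕ) : (Mgen m n : ℝ≥0∞) * μ (In m n) = μ Set.univ := by
  have : (restrictHom m n).ker.FiniteIndex :=
    ⟨by rw [index_ker_restrictHom]; exact (Mgen_pos n).ne'⟩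
  rw [← index_ker_restrictHom, ← coe_ker_restrictHom]
  exact AddSubgroup.index_mul_measure _ (by rw [coe_ker_restrictHom]; exact measurableSet_In m n) μ

def lebesgueConst (μ : Measure (Vil m)) (n : ℕ) : ℝ≥0∞ := ∫⁻ x, ‖vD m n x‖ₑ ∂μ

section LebesgueConstants

variable (μ : Measure (Vil m)) [IsProbabilityMeasure μ] [μ.IsAddLeftInvariant]

lemma lebesgueConst_Mgen (hm : ∀ k, 2 ≤ m k) (n : ℕ) : lebesgueConst μ (Mgen m n) = 1 := by
  have := neZero_of_two_le hm
  simp_rw [lebesgueConst, vD_Mgen hm, enorm_indicator_eq_indicator_enorm]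
  rw [lintegral_indicator (measurableSet_In m n), setLIntegral_const,
    show ‖(Mgen m n : ℂ)‖ₑ = Mgen m n by simp [enorm_eq_nnnorm], Mgen_mul_measure_In, measure_univ]

lemma enorm_vD_mul_Mgen_add_le (hm : ∀ k, 2 ≤ m k) {j s a : ℕ} (hs : s < m j)
    (ha : a ≤ Mgen m j) (x : Vil m) :
    ‖vD m (s * Mgen m j + a) x‖ₑ ≤ s * ‖vD m (Mgen m j) x‖ₑ + ‖vD m a x‖ₑ := by
  have hvrad : ∀ σ, ‖vrad m j x ^ σ‖ₑ = 1 := fun σ => by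
    rw [enorm_pow, ← ofReal_norm, norm_vrad, ENNReal.ofReal_one, one_pow]
  rw [vD_mul_Mgen_add hm hs ha, vD_mul_Mgen hm hs.le]
  refine (enorm_add_le _ _).trans ?_
  rw [enorm_mul, enorm_mul, hvrad, one_mul]
  gcongr
  exact (enorm_sum_le _ _).trans (by simp [hvrad])

lemma lebesgueConst_le (hm : ∀ k, 2 ≤ m k) {Λ : ℕ} (hΛ : ∀ k, m k ≤ Λ) {j n : ℕ}
    (hn : n < Mgen m j) : lebesgueConst μ n ≤ Λ * j := by
  have := neZero_of_two_le hm
  induction j generalizing n with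
  | zero =>
    obtain rfl : n = 0 := by simpa [Mgen] using hn
    simp [lebesgueConst, vD]
  | succ j ih =>
    obtain ⟨s, a, hs, ha, rfl⟩ := exists_eq_mul_Mgen_add hn
    calc lebesgueConst μ (s * Mgen m j + a)
        ≤ ∫⁻ x, s * ‖vD m (Mgen m j) x‖ₑ + ‖vD m a x‖ₑ ∂μ :=
          lintegral_mono (enorm_vD_mul_Mgen_add_le hm hs ha.le)
      _ = s * lebesgueConst μ (Mgen m j) + lebesgueConst μ a := by
          rw [lintegral_add_left ((measurable_vD m _).enorm.const_mul _),
            lintegral_const_mul _ (measurable_vD m _).enorm, lebesgueConst, lebesgueConst]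
      _ ≤ Λ * 1 + Λ * j := by
          rw [lebesgueConst_Mgen μ hm]
          gcongr
          · exact_mod_cast hs.le.trans (hΛ j)
          · exact ih ha
      _ = Λ * (j + 1 : ℕ) := by push_cast; ring

lemma lebesgueConst_Mgen_sub_le (hm : ∀ k, 2 ≤ m k) {n r : ℕ} (hr : r ≤ Mgen m n) :
    lebesgueConst μ (Mgen m n - r) ≤ 1 + lebesgueConst μ r := by
  have hpt : ∀ x, ‖vD m (Mgen m n - r) x‖ₑ ≤ ‖vD m (Mgen m n) x‖ₑ + ‖vD m r x‖ₑ := fun x => by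
    have h := norm_vD_Mgen_sub_vD hm (Nat.sub_le (Mgen m n) r) x
    rw [Nat.sub_sub_self hr] at h
    rw [← ofReal_norm, ← ofReal_norm, ← ofReal_norm, ← h,
      ← ENNReal.ofReal_add (norm_nonneg _) (norm_nonneg _)]
    exact ENNReal.ofReal_le_ofReal (norm_le_insert _ _)
  calc lebesgueConst μ (Mgen m n - r)
      ≤ ∫⁻ x, ‖vD m (Mgen m n) x‖ₑ + ‖vD m r x‖ₑ ∂μ := lintegral_mono hpt
    _ = 1 + lebesgueConst μ r := by
      rw [lintegral_add_left (measurable_vD m _).enorm, ← lebesgueConst, lebesgueConst_Mgen μ hm,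
        lebesgueConst]

lemma sum_Icc_enorm_ces_mul_le (hm : ∀ k, 2 ≤ m k) {α : ℝ} (h₀ : -1 ≤ α) (h₁ : α ≤ 1)
    {n p : ℕ} (hp : Mgen m n ≤ p) :
    ∑ i ∈ Icc 1 (Mgen m n), ‖ces (-α - 1) (p - i)‖ₑ * (lebesgueConst μ i * lebesgueConst μ i)
      ≤ ∑ r ∈ range (Mgen m n), ‖ces (-α - 1) r‖ₑ * (1 + lebesgueConst μ r) ^ 2 := by
  set N := Mgen m n
  have hreflect : ∑ i ∈ Icc 1 N, ‖ces (-α - 1) (p - i)‖ₑ * (lebesgueConst μ i * lebesgueConst μ i)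
      = ∑ r ∈ range N, ‖ces (-α - 1) (p - (N - r))‖ₑ
          * (lebesgueConst μ (N - r) * lebesgueConst μ (N - r)) :=
    sum_nbij' (fun i => N - i) (fun r => N - r)
      (fun i hi => by simp only [mem_Icc, mem_range] at hi ⊢; omega)
      (fun r hr => by simp only [mem_Icc, mem_range] at hr ⊢; omega)
      (fun i hi => by simp only [mem_Icc] at hi; omega)
      (fun r hr => by simp only [mem_range] at hr; omega)
      (fun i hi => by rw [Nat.sub_sub_self (mem_Icc.1 hi).2])
  rw [hreflect]
  refine sum_le_sum fun r hr => ?_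
  have hrN := (mem_range.1 hr).le
  have hces : ‖ces (-α - 1) (p - (N - r))‖ₑ ≤ ‖ces (-α - 1) r‖ₑ := by
    rw [← ofReal_norm, ← ofReal_norm]
    exact ENNReal.ofReal_le_ofReal (abs_ces_neg_antitone h₀ h₁ (by omega))
  rw [sq]
  gcongr <;> exact lebesgueConst_Mgen_sub_le μ hm hrN

end LebesgueConstants

/-- uniform `L¹` bound for the truncated negative-order Cesàro kernel. -/
theorem negative_cesaro_kernel_bound (m : ℕ → ℕ) (hm : ∀ k, 2 ≤ m k)
    (Λ : ℕ) (hΛ : ∀ k, m k ≤ Λ)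
    (μ : Measure (Vil m)) [IsProbabilityMeasure μ] [μ.IsAddLeftInvariant]
    (α : ℝ) (hα : α ∈ Set.Ioo (0 : ℝ) 1) :
    ∃ c : ℝ, 0 < c ∧ ∀ k p : ℕ, 1 ≤ k → Mgen m k ≤ p →
      ∫⁻ z : Vil m × Vil m,
          (‖∑ i ∈ Finset.Icc 1 (Mgen m k),
              ((ces (-α - 1) (p - i) : ℝ) : ℂ) * vD m i z.1 * vD m i z.2‖₊ : ℝ≥0∞)
          ∂(μ.prod μ) ≤ ENNReal.ofReal c := by
  obtain ⟨h₀, h₁⟩ := hα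
  obtain ⟨C, hC, hsum⟩ := exists_sum_range_Mgen_enorm_mul_sq_le hm hΛ h₀
    (abs_ces_neg_mul_rpow_le (by linarith) h₁.le) fun _ _ => lebesgueConst_le μ hm hΛ
  refine ⟨C, hC, fun k p _ hp => ?_⟩
  have hD : ∀ i, AEMeasurable (fun x => ‖vD m i x‖ₑ) μ := fun i =>
    (measurable_vD m i).enorm.aemeasurable
  have hreal : ∀ x : ℝ, ‖(x : ℂ)‖ₑ = ‖x‖ₑ := fun x => congrArg _ (Complex.nnnorm_real x)
  calc _ ≤ ∑ i ∈ Icc 1 (Mgen m k),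
          ‖((ces (-α - 1) (p - i) : ℝ) : ℂ)‖ₑ * (lebesgueConst μ i * lebesgueConst μ i) :=
        lintegral_enorm_sum_mul_le _ _ hD hD
    _ = ∑ i ∈ Icc 1 (Mgen m k),
          ‖ces (-α - 1) (p - i)‖ₑ * (lebesgueConst μ i * lebesgueConst μ i) := by
        simp only [hreal]
    _ ≤ ∑ r ∈ range (Mgen m k), ‖ces (-α - 1) r‖ₑ * (1 + lebesgueConst μ r) ^ 2 :=
        sum_Icc_enorm_ces_mul_le μ hm (by linarith) h₁.le hp
    _ ≤ ENNReal.ofReal C := hsum k
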